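/- For every natural number k ≥ 1 and every natural number d there exists a (2k−2)-strong tournament in which every vertex has in-degree at least d and out-degree at least d, but which is not k-linked. -/

import Mathlib

/-- `l` is a directed path from `x` to `y` in the digraph with arc relation `A`:
a list of pairwise distinct vertices, starting at `x`, ending at `y`, with
consecutive vertices joined by arcs. -/
def IsDipath {V : Type*} (A : V → V → Prop) (x y : V) (l : List V) : Prop :=
  l.Chain' A ∧ l.Nodup ∧ l.head? = some x ∧ l.getLast? = some y

/-- Every ordered pair of distinct vertices of `S` is joined by a directed path
all of whose vertices lie in `S`. -/
def StronglyConnectedOn {V : Type*} (A : V → V → Prop) (S : Set V) : Prop :=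
  ∀ x ∈ S, ∀ y ∈ S, x ≠ y →
    ∃ l : List V, IsDipath A x y l ∧ ∀ v ∈ l, v ∈ S

/-- A digraph is `k`-strong if it has at least `k+1` vertices and deleting any
set of at most `k-1` vertices (i.e. fewer than `k` vertices) leaves it strongly
connected. -/
def IsKStrong {V : Type*} [Fintype V] (A : V → V → Prop) (k : ℕ) : Prop :=
  k + 1 ≤ Fintype.card V ∧
    ∀ S : Finset V, S.card < k → StronglyConnectedOn A {v | v ∉ S}

/-- A digraph is `k`-linked if for every choice of `2k` distinct vertices
`x 0, …, x (k-1), y 0, …, y (k-1)` there are pairwise vertex-disjoint directed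
paths `P i` from `x i` to `y i`. -/
def IsKLinked {V : Type*} (A : V → V → Prop) (k : ℕ) : Prop :=
  ∀ x y : Fin k → V,
    Function.Injective x → Function.Injective y → (∀ i j, x i ≠ y j) →
      ∃ P : Fin k → List V,
        (∀ i, IsDipath A (x i) (y i) (P i)) ∧
        ∀ i j, i ≠ j → ∀ v, v ∈ P i → v ∉ P j

/-- A tournament: loopless, and between any two distinct vertices exactly one arc. -/
def IsTournament {V : Type*} (A : V → V → Prop) : Prop :=
  (∀ v, ¬ A v v) ∧ ∀ x y : V, x ≠ y → (A x y ↔ ¬ A y x)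

/-- A semicomplete digraph: loopless, and between any two distinct vertices at
least one arc. -/
def IsSemicomplete {V : Type*} (A : V → V → Prop) : Prop :=
  (∀ v, ¬ A v v) ∧ ∀ x y : V, x ≠ y → (A x y ∨ A y x)

/-- The out-degree of `v`. -/
noncomputable def outDeg {V : Type*} (A : V → V → Prop) (v : V) : ℕ :=
  {y | A v y}.ncard

/-- The in-degree of `v`. -/
noncomputable def inDeg {V : Type*} (A : V → V → Prop) (v : V) : ℕ :=
  {y | A y v}.ncard

/-- `X = {x 0,…,x (p-1)}` anchors `Y = {y 0,…,y (p-1)}` in the digraph `A`: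
for every permutation `π` of the indices there are pairwise vertex-disjoint
directed paths `Q i` from `x i` to `y (π i)`. -/
def Anchors {V : Type*} {p : ℕ} (A : V → V → Prop) (x y : Fin p → V) : Prop :=
  ∀ π : Equiv.Perm (Fin p),
    ∃ Q : Fin p → List V,
      (∀ i, IsDipath A (x i) (y (π i)) (Q i)) ∧
      ∀ i j, i ≠ j → ∀ v, v ∈ Q i → v ∉ Q j

/-!
Blow up the directed triangle: split the vertices into parts indexed by `ZMod 3`, let every
vertex of part `i` dominate every vertex of part `i + 1`, and orient the arcs inside each part as
a tournament. Deleting fewer vertices than the smallest part leaves every part nonempty, and then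
any two remaining vertices are joined by a path of length at most three running round the
triangle. Every path leaving part `0`, however, enters part `1` first. So if part `1` has exactly
`2k - 2` vertices, it can be filled with the ends of `k - 1` terminal pairs, and a last pair from
part `0` to part `2` cannot be linked disjointly from them. A vertex of part `1` dominates all of
part `2` and is dominated by all of part `0`; for the degrees of the outer parts we take those to
be blown-up triangles themselves, with transitive tournaments on `N ≥ d` vertices inside.
-/

open Function

section Digraph

variable {V W : Type*}

theorem IsDipath.left_mem {A : V → V → Prop} {x y : V} {l : List V} (h : IsDipath A x y l) :
    x ∈ l :=
  List.mem_of_mem_head? h.2.2.1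

theorem IsDipath.right_mem {A : V → V → Prop} {x y : V} {l : List V} (h : IsDipath A x y l) :
    y ∈ l :=
  List.mem_of_getLast? h.2.2.2

theorem IsDipath.map {A : V → V → Prop} {B : W → W → Prop} {f : V → W} (hf : Injective f)
    (hAB : ∀ a b, A a b → B (f a) (f b)) {x y : V} {l : List V} (h : IsDipath A x y l) :
    IsDipath B (f x) (f y) (l.map f) := by
  obtain ⟨hc, hnd, hx, hy⟩ := h
  exact ⟨List.isChain_map f |>.2 (hc.imp hAB), hnd.map hf, by simp [hx], by simp [hy]⟩

theorem IsTournament.comap {A : V → V → Prop} (hA : IsTournament A) {f : W → V}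
    (hf : Injective f) : IsTournament fun a b => A (f a) (f b) :=
  ⟨fun v => hA.1 (f v), fun _ _ hab => hA.2 _ _ (hf.ne hab)⟩

theorem isTournament_lt [LinearOrder V] : IsTournament (V := V) (· < ·) :=
  ⟨lt_irrefl, fun _ _ hab => ⟨lt_asymm, fun h => (lt_or_gt_of_ne hab).resolve_right h⟩⟩

theorem IsTournament.sumLex {r : V → V → Prop} {s : W → W → Prop} (hr : IsTournament r)
    (hs : IsTournament s) : IsTournament (Sum.Lex r s) := by
  refine ⟨?_, ?_⟩
  · rintro (a | b) <;> simp [hr.1, hs.1]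
  · rintro (a | b) (a' | b') h
    · simpa using hr.2 a a' (by simpa using h)
    · simp
    · simp
    · simpa using hs.2 b b' (by simpa using h)

theorem outDeg_comap_equiv (A : V → V → Prop) (e : W ≃ V) (w : W) :
    outDeg (fun a b => A (e a) (e b)) w = outDeg A (e w) :=
  Set.ncard_preimage_of_injective_subset_range (s := {y | A (e w) y}) e.injective (by simp)

theorem inDeg_comap_equiv (A : V → V → Prop) (e : W ≃ V) (w : W) :
    inDeg (fun a b => A (e a) (e b)) w = inDeg A (e w) :=
  Set.ncard_preimage_of_injective_subset_range (s := {y | A y (e w)}) e.injective (by simp)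

theorem IsKStrong.comap_equiv [Fintype V] [Fintype W] {A : V → V → Prop} {t : ℕ}
    (hA : IsKStrong A t) (e : W ≃ V) : IsKStrong (fun a b => A (e a) (e b)) t := by
  refine ⟨Fintype.card_congr e ▸ hA.1, fun S hS x hx y hy hxy => ?_⟩
  have hS' : (S.map e.toEmbedding).card < t := by rwa [Finset.card_map]
  obtain ⟨l, hl, hlS⟩ := hA.2 _ hS' (e x) (by simpa using hx) (e y) (by simpa using hy)
    (e.injective.ne hxy)
  refine ⟨l.map e.symm, by simpa using hl.map e.symm.injective (by simp), ?_⟩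
  simp only [List.mem_map, Set.mem_ofPred_eq]
  rintro _ ⟨v, hv, rfl⟩ hvS
  exact hlS v hv (by simpa using hvS)

theorem IsKLinked.of_comap_equiv {A : V → V → Prop} {k : ℕ} (e : W ≃ V)
    (hA : IsKLinked (fun a b => A (e a) (e b)) k) : IsKLinked A k := by
  intro x y hx hy hxy
  obtain ⟨P, hP, hdisj⟩ := hA (e.symm ∘ x) (e.symm ∘ y) (e.symm.injective.comp hx)
    (e.symm.injective.comp hy) (fun i j => e.symm.injective.ne (hxy i j))
  refine ⟨fun i => (P i).map e, fun i => by simpa using (hP i).map e.injective (fun _ _ h => h),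
    fun i j hij v hvi hvj => ?_⟩
  simp only [List.mem_map] at hvi hvj
  obtain ⟨a, ha, rfl⟩ := hvi
  obtain ⟨b, hb, hab⟩ := hvj
  exact hdisj i j hij a ha (e.injective hab ▸ hb)

theorem natCard_le_ncard_of_injective [Finite V] {s : Set V} {f : W → V} (hf : Injective f)
    (hs : ∀ w, f w ∈ s) : Nat.card W ≤ s.ncard := by
  rw [← Set.ncard_range_of_injective hf]
  exact Set.ncard_le_ncard (Set.range_subset_iff.2 hs)

theorem le_outDeg_of_injective [Finite V] {A : V → V → Prop} {v : V} {f : W → V}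
    (hf : Injective f) (hA : ∀ w, A v (f w)) : Nat.card W ≤ outDeg A v :=
  natCard_le_ncard_of_injective hf hA

theorem le_inDeg_of_injective [Finite V] {A : V → V → Prop} {v : V} {f : W → V}
    (hf : Injective f) (hA : ∀ w, A (f w) v) : Nat.card W ≤ inDeg A v :=
  natCard_le_ncard_of_injective hf hA

theorem outDeg_le_outDeg_of_hom [Finite W] {A : V → V → Prop} {B : W → W → Prop}
    {f : V → W} (hf : Injective f) (hAB : ∀ a b, A a b → B (f a) (f b)) (v : V) :
    outDeg A v ≤ outDeg B (f v) :=
  Set.ncard_le_ncard_of_injOn f (fun _ h => hAB _ _ h) hf.injOn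

theorem inDeg_le_inDeg_of_hom [Finite W] {A : V → V → Prop} {B : W → W → Prop}
    {f : V → W} (hf : Injective f) (hAB : ∀ a b, A a b → B (f a) (f b)) (v : V) :
    inDeg A v ≤ inDeg B (f v) :=
  Set.ncard_le_ncard_of_injOn f (fun _ h => hAB _ _ h) hf.injOn

theorem not_isKLinked_of_forall_dipath_meets {A : V → V → Prop} {k : ℕ} {x y : Fin k → V}
    (hx : Injective x) (hy : Injective y) (hxy : ∀ i j, x i ≠ y j) (i : Fin k)
    (hmeet : ∀ l, IsDipath A (x i) (y i) l → ∃ j ≠ i, x j ∈ l ∨ y j ∈ l) :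
    ¬ IsKLinked A k := by
  intro hA
  obtain ⟨P, hP, hdisj⟩ := hA x y hx hy hxy
  obtain ⟨j, hji, hj | hj⟩ := hmeet (P i) (hP i)
  · exact hdisj i j hji.symm _ hj (hP j).left_mem
  · exact hdisj i j hji.symm _ hj (hP j).right_mem

end Digraph

section CyclicTriple

variable {V : Type*} (p : V → ZMod 3) (R : V → V → Prop)

def cyclicTriple (a b : V) : Prop :=
  p a = p b ∧ R a b ∨ p b = p a + 1

variable {p R}

theorem isTournament_cyclicTriple (hirr : ∀ v, ¬ R v v)
    (hR : ∀ a b, p a = p b → a ≠ b → (R a b ↔ ¬ R b a)) :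
    IsTournament (cyclicTriple p R) := by
  refine ⟨fun v h => ?_, fun a b hab => ?_⟩
  · rcases h with ⟨-, h⟩ | h
    · exact hirr v h
    · exact absurd h (by generalize p v = c; revert c; decide)
  · unfold cyclicTriple
    by_cases hp : p a = p b
    · rw [hR a b hp hab, hp]
      have : p b ≠ p b + 1 := by generalize p b = c; revert c; decide
      simp [this]
    · have : ∀ c c' : ZMod 3, c ≠ c' → (c' = c + 1 ↔ ¬ c = c' + 1) := by decide
      simp [hp, Ne.symm hp, this _ _ hp]

theorem stronglyConnectedOn_cyclicTriple {S : Set V} (hS : ∀ c, ∃ v ∈ S, p v = c) :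
    StronglyConnectedOn (cyclicTriple p R) S := by
  intro x hx y hy hxy
  obtain ⟨u, hu, hpu⟩ := hS (p x + 1)
  obtain ⟨w, hw, hpw⟩ := hS (p x + 2)
  have hne {a b : V} (h : p a ≠ p b) : a ≠ b := ne_of_apply_ne p h
  have hcyc : ∀ c : ZMod 3,
      c ≠ c + 1 ∧ c ≠ c + 2 ∧ c + 1 ≠ c + 2 ∧ c + 2 + 1 = c ∧ c + 1 + 1 = c + 2 := by
    decide
  obtain ⟨h01, h02, h12, h20, h11⟩ := hcyc (p x)
  have hcases : ∀ a b : ZMod 3, b = a + 1 ∨ b = a + 2 ∨ b = a := by decide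
  have hxu : x ≠ u := hne (by rw [hpu]; exact h01)
  have hxw : x ≠ w := hne (by rw [hpw]; exact h02)
  have huw : u ≠ w := hne (by rw [hpu, hpw]; exact h12)
  rcases hcases (p x) (p y) with h | h | h
  · refine ⟨[x, y], ⟨(?_ : List.IsChain _ _), ?_, rfl, rfl⟩, by simp [hx, hy]⟩
    · simp [cyclicTriple, h]
    · simp [hxy]
  · have huy : u ≠ y := hne (by rw [hpu, h]; exact h12)
    refine ⟨[x, u, y], ⟨(?_ : List.IsChain _ _), ?_, rfl, rfl⟩, by simp [hx, hu, hy]⟩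
    · simp [cyclicTriple, h, hpu, h11]
    · simp [hxy, hxu, huy]
  · have huy : u ≠ y := hne (by rw [hpu, h]; exact h01.symm)
    have hwy : w ≠ y := hne (by rw [hpw, h]; exact h02.symm)
    refine ⟨[x, u, w, y], ⟨(?_ : List.IsChain _ _), ?_, rfl, rfl⟩, by simp [hx, hu, hw, hy]⟩
    · simp [cyclicTriple, h, hpu, hpw, h11, h20]
    · simp [hxy, hxu, hxw, huw, huy, hwy]

theorem isKStrong_cyclicTriple [Fintype V] {t : ℕ} (hcard : t + 1 ≤ Fintype.card V)
    (hpart : ∀ c, t ≤ {v | p v = c}.ncard) : IsKStrong (cyclicTriple p R) t := by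
  refine ⟨hcard, fun S hS => stronglyConnectedOn_cyclicTriple fun c => ?_⟩
  obtain ⟨v, hv, hvS⟩ := Set.exists_mem_notMem_of_ncard_lt_ncard
    (s := (S : Set V)) (t := {v | p v = c})
    (by rw [Set.ncard_coe_finset]; exact hS.trans_le (hpart c))
  exact ⟨v, hvS, hv⟩

theorem List.IsChain.exists_mem_succ_part_cyclicTriple :
    ∀ {a : V} {l : List V}, (a :: l).IsChain (cyclicTriple p R) →
      p ((a :: l).getLast (List.cons_ne_nil a l)) ≠ p a → ∃ v ∈ l, p v = p a + 1
  | _, [], _, h => (h rfl).elim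
  | a, b :: l, hc, h => by
    rw [List.isChain_cons_cons] at hc
    rcases hc.1 with ⟨hab, -⟩ | hab
    · obtain ⟨v, hv, hpv⟩ := exists_mem_succ_part_cyclicTriple hc.2 (by simpa [hab] using h)
      exact ⟨v, List.mem_cons_of_mem _ hv, hab ▸ hpv⟩
    · exact ⟨b, List.mem_cons_self, hab⟩

theorem IsDipath.exists_mem_succ_part_cyclicTriple {x y : V} {l : List V}
    (hl : IsDipath (cyclicTriple p R) x y l) (hxy : p y ≠ p x) : ∃ v ∈ l, p v = p x + 1 := by
  obtain ⟨hc, -, hx, hy⟩ := hl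
  obtain _ | ⟨a, l⟩ := l
  · simp at hx
  obtain rfl : a = x := by simpa using hx
  rw [List.getLast?_eq_some_getLast (List.cons_ne_nil _ _), Option.some_inj] at hy
  obtain ⟨v, hv, hpv⟩ := hc.exists_mem_succ_part_cyclicTriple (hy ▸ hxy)
  exact ⟨v, List.mem_cons_of_mem _ hv, hpv⟩

end CyclicTriple

section CyclicSum

variable {X Y Z : Type*}

def threePart : X ⊕ Y ⊕ Z → ZMod 3
  | .inl _ => 0
  | .inr (.inl _) => 1
  | .inr (.inr _) => 2

def cyclicSum (r : X → X → Prop) (s : Y → Y → Prop) (t : Z → Z → Prop) :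
    X ⊕ Y ⊕ Z → X ⊕ Y ⊕ Z → Prop :=
  cyclicTriple threePart (Sum.Lex r (Sum.Lex s t))

variable {r : X → X → Prop} {s : Y → Y → Prop} {t : Z → Z → Prop}

@[simp] theorem cyclicSum_inl_inl {a b : X} :
    cyclicSum r s t (.inl a) (.inl b) ↔ r a b := by
  simp [cyclicSum, cyclicTriple, threePart]

@[simp] theorem cyclicSum_inr_inr_inr_inr {a b : Z} :
    cyclicSum r s t (.inr (.inr a)) (.inr (.inr b)) ↔ t a b := by
  simp [cyclicSum, cyclicTriple, threePart]

theorem cyclicSum_inl_inr_inl (a : X) (b : Y) : cyclicSum r s t (.inl a) (.inr (.inl b)) := by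
  simp [cyclicSum, cyclicTriple, threePart]

theorem cyclicSum_inr_inl_inr_inr (a : Y) (b : Z) :
    cyclicSum r s t (.inr (.inl a)) (.inr (.inr b)) := by
  simp [cyclicSum, cyclicTriple, threePart]; decide

theorem cyclicSum_inr_inr_inl (a : Z) (b : X) : cyclicSum r s t (.inr (.inr a)) (.inl b) := by
  simp [cyclicSum, cyclicTriple, threePart]; decide

theorem IsTournament.cyclicSum (hr : IsTournament r) (hs : IsTournament s)
    (ht : IsTournament t) : IsTournament (cyclicSum r s t) :=
  have h := hr.sumLex (hs.sumLex ht)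
  isTournament_cyclicTriple h.1 fun a b _ => h.2 a b

theorem isKStrong_cyclicSum [Fintype X] [Fintype Y] [Fintype Z] {m : ℕ}
    (hX : m < Nat.card X) (hY : m ≤ Nat.card Y) (hZ : m ≤ Nat.card Z) :
    IsKStrong (cyclicSum r s t) m := by
  refine isKStrong_cyclicTriple ?_ fun c => ?_
  · simp only [← Nat.card_eq_fintype_card, Nat.card_sum]
    omega
  obtain rfl | rfl | rfl : c = 0 ∨ c = 1 ∨ c = 2 := by revert c; decide
  · exact hX.le.trans (natCard_le_ncard_of_injective Sum.inl_injective fun _ => rfl)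
  · exact hY.trans
      (natCard_le_ncard_of_injective (Sum.inr_injective.comp Sum.inl_injective) fun _ => rfl)
  · exact hZ.trans
      (natCard_le_ncard_of_injective (Sum.inr_injective.comp Sum.inr_injective) fun _ => rfl)

theorem not_isKLinked_cyclicSum {k : ℕ} {s : Fin k ⊕ Fin k → Fin k ⊕ Fin k → Prop} (a : X)
    (c : Z) : ¬ IsKLinked (cyclicSum r s t) (k + 1) := by
  let x : Fin (k + 1) → X ⊕ (Fin k ⊕ Fin k) ⊕ Z :=
    Fin.lastCases (.inl a) (.inr ∘ .inl ∘ .inl)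
  let y : Fin (k + 1) → X ⊕ (Fin k ⊕ Fin k) ⊕ Z :=
    Fin.lastCases (.inr (.inr c)) (.inr ∘ .inl ∘ .inr)
  refine not_isKLinked_of_forall_dipath_meets (x := x) (y := y) ?_ ?_ ?_ (Fin.last k) ?_
  · intro i j
    induction i using Fin.lastCases <;> induction j using Fin.lastCases <;> simp [x]
  · intro i j
    induction i using Fin.lastCases <;> induction j using Fin.lastCases <;> simp [y]
  · intro i j
    induction i using Fin.lastCases <;> induction j using Fin.lastCases <;> simp [x, y]
  intro l hl
  obtain ⟨v, hv, hpv⟩ := hl.exists_mem_succ_part_cyclicTriple (by simp [x, y, threePart]; decide)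
  rcases v with _ | (j | j) | _
  · simp [x, threePart] at hpv
  · exact ⟨j.castSucc, Fin.castSucc_ne_last j, .inl (by simpa [x] using hv)⟩
  · exact ⟨j.castSucc, Fin.castSucc_ne_last j, .inr (by simpa [y] using hv)⟩
  · simp [x, threePart] at hpv
    exact absurd hpv (by decide)

variable [Finite X] [Finite Y] [Finite Z] {d : ℕ}

theorem le_outDeg_cyclicSum (hr : ∀ a, d ≤ outDeg r a) (hX : d ≤ Nat.card X)
    (hZ : d ≤ Nat.card Z) : ∀ v, d ≤ outDeg (cyclicSum r s t) v
  | .inl a => (hr a).trans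
      (outDeg_le_outDeg_of_hom Sum.inl_injective (fun _ _ => cyclicSum_inl_inl.2) a)
  | .inr (.inl b) => hZ.trans
      (le_outDeg_of_injective (Sum.inr_injective.comp Sum.inr_injective)
        (cyclicSum_inr_inl_inr_inr b))
  | .inr (.inr c) => hX.trans
      (le_outDeg_of_injective Sum.inl_injective (cyclicSum_inr_inr_inl c))

theorem le_inDeg_cyclicSum (ht : ∀ c, d ≤ inDeg t c) (hX : d ≤ Nat.card X)
    (hZ : d ≤ Nat.card Z) : ∀ v, d ≤ inDeg (cyclicSum r s t) v
  | .inl a => hZ.trans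
      (le_inDeg_of_injective (Sum.inr_injective.comp Sum.inr_injective)
        (cyclicSum_inr_inr_inl · a))
  | .inr (.inl b) => hX.trans
      (le_inDeg_of_injective Sum.inl_injective (cyclicSum_inl_inr_inl · b))
  | .inr (.inr c) => (ht c).trans
      (inDeg_le_inDeg_of_hom (Sum.inr_injective.comp Sum.inr_injective)
        (fun _ _ => cyclicSum_inr_inr_inr_inr.2) c)

end CyclicSum

section TransitiveCyclicTriple

variable (N : ℕ)

def transitiveCyclicTriple : ZMod 3 × Fin N → ZMod 3 × Fin N → Prop :=
  cyclicTriple Prod.fst fun a b => a.2 < b.2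

theorem isTournament_transitiveCyclicTriple : IsTournament (transitiveCyclicTriple N) :=
  isTournament_cyclicTriple (fun v => lt_irrefl v.2) fun a b hp hab =>
    isTournament_lt.2 a.2 b.2 fun h => hab (Prod.ext hp h)

theorem le_outDeg_transitiveCyclicTriple (v : ZMod 3 × Fin N) :
    N ≤ outDeg (transitiveCyclicTriple N) v := by
  simpa using le_outDeg_of_injective (A := transitiveCyclicTriple N)
    (Prod.mk_right_injective (v.1 + 1)) fun _ => Or.inr rfl

theorem le_inDeg_transitiveCyclicTriple (v : ZMod 3 × Fin N) :
    N ≤ inDeg (transitiveCyclicTriple N) v := by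
  simpa using le_inDeg_of_injective (A := transitiveCyclicTriple N)
    (Prod.mk_right_injective (v.1 - 1)) fun _ => Or.inr (sub_add_cancel _ _).symm

end TransitiveCyclicTriple

/-- For every `k ≥ 1` and every `d` there is a `(2k-2)`-strong tournament with
minimum in- and out-degree at least `d` that is not `k`-linked. -/
theorem exists_2k_sub_2_strong_tournament_high_degrees_not_k_linked
    (k : ℕ) (hk : 1 ≤ k) (d : ℕ) :
    ∃ n : ℕ, ∃ A : Fin n → Fin n → Prop,
      IsTournament A ∧ IsKStrong A (2 * k - 2) ∧
      (∀ v, d ≤ inDeg A v) ∧ (∀ v, d ≤ outDeg A v) ∧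
      ¬ IsKLinked A k := by
  obtain ⟨k, rfl⟩ : ∃ j, k = j + 1 := ⟨k - 1, by omega⟩
  obtain ⟨N, hdN, hkN⟩ : ∃ N, d ≤ N ∧ k < N := ⟨d + k + 1, by omega, by omega⟩
  let T := transitiveCyclicTriple N
  let A := cyclicSum T (Sum.Lex (· < ·) (· < ·) : Fin k ⊕ Fin k → Fin k ⊕ Fin k → Prop) T
  let e := (Fintype.equivFin (ZMod 3 × Fin N ⊕ (Fin k ⊕ Fin k) ⊕ ZMod 3 × Fin N)).symm
  have hT : Nat.card (ZMod 3 × Fin N) = 3 * N := by simp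
  refine ⟨_, fun a b => A (e a) (e b), ?_, ?_, fun v => ?_, fun v => ?_, fun h => ?_⟩
  · exact ((isTournament_transitiveCyclicTriple N).cyclicSum
      (isTournament_lt.sumLex isTournament_lt) (isTournament_transitiveCyclicTriple N)).comap
        e.injective
  · rw [show 2 * (k + 1) - 2 = 2 * k by omega]
    exact (isKStrong_cyclicSum (by omega) (by simp; omega) (by omega)).comap_equiv e
  · rw [inDeg_comap_equiv]
    exact le_inDeg_cyclicSum (fun c => hdN.trans (le_inDeg_transitiveCyclicTriple N c))
      (by omega) (by omega) _
  · rw [outDeg_comap_equiv]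
    exact le_outDeg_cyclicSum (fun a => hdN.trans (le_outDeg_transitiveCyclicTriple N a))
      (by omega) (by omega) _
  · exact not_isKLinked_cyclicSum (0, ⟨0, by omega⟩) (0, ⟨0, by omega⟩) (h.of_comap_equiv e)
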